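/- For the unique value function f of the 3PG, f(100100 | {2,3}) = 51/5; i.e., in the state where exactly the relations '1 beats 2' and '3 beats 1' have occurred and players 2 and 3 are in the ring, the value is 51/5. -/
import Mathlib


/-- A state of the three-player game (3PG): `beats i j` records whether the event
"player `i` has beaten player `j`" has occurred, and `ring` is the (unordered)
pair of the two players currently in the ring. -/
structure PGState where
  beats : Fin 3 → Fin 3 → Bool
  ring : Finset (Fin 3)
  card_ring : ring.card = 2

/-- A state is terminal if all six win-lose relations have occurred. -/
def PGState.Terminal (S : PGState) : Prop :=
  ∀ i j : Fin 3, i ≠ j → S.beats i j = true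

/-- The successor state in which player `w` beats player `l` in the current round
and the third player `t` enters the ring. -/
def PGState.succ (S : PGState) (w l t : Fin 3) (hwt : w ≠ t) : PGState :=
  ⟨fun i j => if i = w ∧ j = l then true else S.beats i j, {w, t}, Finset.card_pair hwt⟩

/-- `f` is a value function for the 3PG: it vanishes on terminal states and
satisfies the reduction rule `f S = 1 + (f S₁ + f S₂)/2` on non-terminal states,
where `S₁` and `S₂` are the two successors of `S`. -/
def IsValueFn (f : PGState → ℝ) : Prop :=
  (∀ S : PGState, S.Terminal → f S = 0) ∧
  ∀ (S : PGState) (t₁ t₂ t₃ : Fin 3) (_ : t₁ ≠ t₂) (h₁₃ : t₁ ≠ t₃) (h₂₃ : t₂ ≠ t₃),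
    S.ring = {t₁, t₂} → ¬ S.Terminal →
    f S = 1 + (f (S.succ t₁ t₂ t₃ h₁₃) + f (S.succ t₂ t₁ t₃ h₂₃)) / 2

/-- The win-lose record `(b₁b₂b₃b₄b₅b₆)`, where the six bits indicate whether the
relations "1 beats 2", "2 beats 1", "1 beats 3", "3 beats 1", "2 beats 3",
"3 beats 2" have occurred (players 1, 2, 3 are `0, 1, 2 : Fin 3`). -/
def mkBeats (b₁ b₂ b₃ b₄ b₅ b₆ : Bool) : Fin 3 → Fin 3 → Bool := fun i j =>
  if i = 0 ∧ j = 1 then b₁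
  else if i = 1 ∧ j = 0 then b₂
  else if i = 0 ∧ j = 2 then b₃
  else if i = 2 ∧ j = 0 then b₄
  else if i = 1 ∧ j = 2 then b₅
  else if i = 2 ∧ j = 1 then b₆
  else false

/-- The state `(b₁b₂b₃b₄b₅b₆ | {t₁, t₂})`. -/
def mkState (b₁ b₂ b₃ b₄ b₅ b₆ : Bool) (t₁ t₂ : Fin 3) (h : t₁ ≠ t₂ := by decide) :
    PGState :=
  ⟨mkBeats b₁ b₂ b₃ b₄ b₅ b₆, {t₁, t₂}, Finset.card_pair h⟩


instance : DecidablePred PGState.Terminal := fun S =>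
  decidable_of_iff (∀ i j : Fin 3, i ≠ j → S.beats i j = true) Iff.rfl

private lemma mk_eq {b b' : Fin 3 → Fin 3 → Bool} {r r' : Finset (Fin 3)}
    {h : r.card = 2} {h' : r'.card = 2} (hb : b = b') (hr : r = r') :
    PGState.mk b r h = PGState.mk b' r' h' := by subst hb; subst hr; rfl

private lemma step (f : PGState → ℝ) (hf : IsValueFn f)
    (S T₁ T₂ : PGState) (t₁ t₂ t₃ : Fin 3) (h₁₂ : t₁ ≠ t₂) (h₁₃ : t₁ ≠ t₃) (h₂₃ : t₂ ≠ t₃)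
    (hr : S.ring = {t₁, t₂}) (hnt : ¬ S.Terminal)
    (e₁ : S.succ t₁ t₂ t₃ h₁₃ = T₁) (e₂ : S.succ t₂ t₁ t₃ h₂₃ = T₂) :
    f S = 1 + (f T₁ + f T₂) / 2 := by
  rw [← e₁, ← e₂]; exact hf.2 S t₁ t₂ t₃ h₁₂ h₁₃ h₂₃ hr hnt

/-- `f(100100|{2,3}) = 51/5`. -/
theorem threePG_100100_23 (f : PGState → ℝ) (hf : IsValueFn f) :
    f (mkState true false false true false false 1 2) = 51 / 5 := by
  have e0 : f (mkState true false false true false false 1 2) = 1 + (f (mkState true false false true true false 0 1) + f (mkState true false false true false true 0 2)) / 2 :=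
    step f hf _ _ _ 1 2 0 (by decide) (by decide) (by decide) rfl (by decide) (by apply mk_eq <;> decide) (by apply mk_eq <;> decide)
  have e1 : f (mkState true false false true true false 0 1) = 1 + (f (mkState true false false true true false 0 2) + f (mkState true true false true true false 1 2)) / 2 :=
    step f hf _ _ _ 0 1 2 (by decide) (by decide) (by decide) rfl (by decide) (by apply mk_eq <;> decide) (by apply mk_eq <;> decide)
  have e2 : f (mkState true false false true false true 0 2) = 1 + (f (mkState true false true true false true 0 1) + f (mkState true false false true false true 1 2)) / 2 :=
    step f hf _ _ _ 0 2 1 (by decide) (by decide) (by decide) rfl (by decide) (by apply mk_eq <;> decide) (by apply mk_eq <;> decide)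
  have e3 : f (mkState true false false true true false 0 2) = 1 + (f (mkState true false true true true false 0 1) + f (mkState true false false true true false 1 2)) / 2 :=
    step f hf _ _ _ 0 2 1 (by decide) (by decide) (by decide) rfl (by decide) (by apply mk_eq <;> decide) (by apply mk_eq <;> decide)
  have e4 : f (mkState true true false true true false 1 2) = 1 + (f (mkState true true false true true false 0 1) + f (mkState true true false true true true 0 2)) / 2 :=
    step f hf _ _ _ 1 2 0 (by decide) (by decide) (by decide) rfl (by decide) (by apply mk_eq <;> decide) (by apply mk_eq <;> decide)
  have e5 : f (mkState true false true true false true 0 1) = 1 + (f (mkState true false true true false true 0 2) + f (mkState true true true true false true 1 2)) / 2 :=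
    step f hf _ _ _ 0 1 2 (by decide) (by decide) (by decide) rfl (by decide) (by apply mk_eq <;> decide) (by apply mk_eq <;> decide)
  have e6 : f (mkState true false false true false true 1 2) = 1 + (f (mkState true false false true true true 0 1) + f (mkState true false false true false true 0 2)) / 2 :=
    step f hf _ _ _ 1 2 0 (by decide) (by decide) (by decide) rfl (by decide) (by apply mk_eq <;> decide) (by apply mk_eq <;> decide)
  have e7 : f (mkState true false true true true false 0 1) = 1 + (f (mkState true false true true true false 0 2) + f (mkState true true true true true false 1 2)) / 2 :=
    step f hf _ _ _ 0 1 2 (by decide) (by decide) (by decide) rfl (by decide) (by apply mk_eq <;> decide) (by apply mk_eq <;> decide)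
  have e8 : f (mkState true false false true true false 1 2) = 1 + (f (mkState true false false true true false 0 1) + f (mkState true false false true true true 0 2)) / 2 :=
    step f hf _ _ _ 1 2 0 (by decide) (by decide) (by decide) rfl (by decide) (by apply mk_eq <;> decide) (by apply mk_eq <;> decide)
  have e9 : f (mkState true true false true true false 0 1) = 1 + (f (mkState true true false true true false 0 2) + f (mkState true true false true true false 1 2)) / 2 :=
    step f hf _ _ _ 0 1 2 (by decide) (by decide) (by decide) rfl (by decide) (by apply mk_eq <;> decide) (by apply mk_eq <;> decide)
  have e10 : f (mkState true true false true true true 0 2) = 1 + (f (mkState true true true true true true 0 1) + f (mkState true true false true true true 1 2)) / 2 :=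
    step f hf _ _ _ 0 2 1 (by decide) (by decide) (by decide) rfl (by decide) (by apply mk_eq <;> decide) (by apply mk_eq <;> decide)
  have e11 : f (mkState true false true true false true 0 2) = 1 + (f (mkState true false true true false true 0 1) + f (mkState true false true true false true 1 2)) / 2 :=
    step f hf _ _ _ 0 2 1 (by decide) (by decide) (by decide) rfl (by decide) (by apply mk_eq <;> decide) (by apply mk_eq <;> decide)
  have e12 : f (mkState true true true true false true 1 2) = 1 + (f (mkState true true true true true true 0 1) + f (mkState true true true true false true 0 2)) / 2 :=
    step f hf _ _ _ 1 2 0 (by decide) (by decide) (by decide) rfl (by decide) (by apply mk_eq <;> decide) (by apply mk_eq <;> decide)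
  have e13 : f (mkState true false false true true true 0 1) = 1 + (f (mkState true false false true true true 0 2) + f (mkState true true false true true true 1 2)) / 2 :=
    step f hf _ _ _ 0 1 2 (by decide) (by decide) (by decide) rfl (by decide) (by apply mk_eq <;> decide) (by apply mk_eq <;> decide)
  have e14 : f (mkState true false true true true false 0 2) = 1 + (f (mkState true false true true true false 0 1) + f (mkState true false true true true false 1 2)) / 2 :=
    step f hf _ _ _ 0 2 1 (by decide) (by decide) (by decide) rfl (by decide) (by apply mk_eq <;> decide) (by apply mk_eq <;> decide)
  have e15 : f (mkState true true true true true false 1 2) = 1 + (f (mkState true true true true true false 0 1) + f (mkState true true true true true true 0 2)) / 2 :=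
    step f hf _ _ _ 1 2 0 (by decide) (by decide) (by decide) rfl (by decide) (by apply mk_eq <;> decide) (by apply mk_eq <;> decide)
  have e16 : f (mkState true false false true true true 0 2) = 1 + (f (mkState true false true true true true 0 1) + f (mkState true false false true true true 1 2)) / 2 :=
    step f hf _ _ _ 0 2 1 (by decide) (by decide) (by decide) rfl (by decide) (by apply mk_eq <;> decide) (by apply mk_eq <;> decide)
  have e17 : f (mkState true true false true true false 0 2) = 1 + (f (mkState true true true true true false 0 1) + f (mkState true true false true true false 1 2)) / 2 :=
    step f hf _ _ _ 0 2 1 (by decide) (by decide) (by decide) rfl (by decide) (by apply mk_eq <;> decide) (by apply mk_eq <;> decide)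
  have e18 : f (mkState true true true true true true 0 1) = 0 := hf.1 _ (by decide)
  have e19 : f (mkState true true false true true true 1 2) = 1 + (f (mkState true true false true true true 0 1) + f (mkState true true false true true true 0 2)) / 2 :=
    step f hf _ _ _ 1 2 0 (by decide) (by decide) (by decide) rfl (by decide) (by apply mk_eq <;> decide) (by apply mk_eq <;> decide)
  have e20 : f (mkState true false true true false true 1 2) = 1 + (f (mkState true false true true true true 0 1) + f (mkState true false true true false true 0 2)) / 2 :=
    step f hf _ _ _ 1 2 0 (by decide) (by decide) (by decide) rfl (by decide) (by apply mk_eq <;> decide) (by apply mk_eq <;> decide)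
  have e21 : f (mkState true true true true false true 0 2) = 1 + (f (mkState true true true true false true 0 1) + f (mkState true true true true false true 1 2)) / 2 :=
    step f hf _ _ _ 0 2 1 (by decide) (by decide) (by decide) rfl (by decide) (by apply mk_eq <;> decide) (by apply mk_eq <;> decide)
  have e22 : f (mkState true false true true true false 1 2) = 1 + (f (mkState true false true true true false 0 1) + f (mkState true false true true true true 0 2)) / 2 :=
    step f hf _ _ _ 1 2 0 (by decide) (by decide) (by decide) rfl (by decide) (by apply mk_eq <;> decide) (by apply mk_eq <;> decide)
  have e23 : f (mkState true true true true true false 0 1) = 1 + (f (mkState true true true true true false 0 2) + f (mkState true true true true true false 1 2)) / 2 :=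
    step f hf _ _ _ 0 1 2 (by decide) (by decide) (by decide) rfl (by decide) (by apply mk_eq <;> decide) (by apply mk_eq <;> decide)
  have e24 : f (mkState true true true true true true 0 2) = 0 := hf.1 _ (by decide)
  have e25 : f (mkState true false true true true true 0 1) = 1 + (f (mkState true false true true true true 0 2) + f (mkState true true true true true true 1 2)) / 2 :=
    step f hf _ _ _ 0 1 2 (by decide) (by decide) (by decide) rfl (by decide) (by apply mk_eq <;> decide) (by apply mk_eq <;> decide)
  have e26 : f (mkState true false false true true true 1 2) = 1 + (f (mkState true false false true true true 0 1) + f (mkState true false false true true true 0 2)) / 2 :=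
    step f hf _ _ _ 1 2 0 (by decide) (by decide) (by decide) rfl (by decide) (by apply mk_eq <;> decide) (by apply mk_eq <;> decide)
  have e27 : f (mkState true true false true true true 0 1) = 1 + (f (mkState true true false true true true 0 2) + f (mkState true true false true true true 1 2)) / 2 :=
    step f hf _ _ _ 0 1 2 (by decide) (by decide) (by decide) rfl (by decide) (by apply mk_eq <;> decide) (by apply mk_eq <;> decide)
  have e28 : f (mkState true true true true false true 0 1) = 1 + (f (mkState true true true true false true 0 2) + f (mkState true true true true false true 1 2)) / 2 :=
    step f hf _ _ _ 0 1 2 (by decide) (by decide) (by decide) rfl (by decide) (by apply mk_eq <;> decide) (by apply mk_eq <;> decide)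
  have e29 : f (mkState true false true true true true 0 2) = 1 + (f (mkState true false true true true true 0 1) + f (mkState true false true true true true 1 2)) / 2 :=
    step f hf _ _ _ 0 2 1 (by decide) (by decide) (by decide) rfl (by decide) (by apply mk_eq <;> decide) (by apply mk_eq <;> decide)
  have e30 : f (mkState true true true true true false 0 2) = 1 + (f (mkState true true true true true false 0 1) + f (mkState true true true true true false 1 2)) / 2 :=
    step f hf _ _ _ 0 2 1 (by decide) (by decide) (by decide) rfl (by decide) (by apply mk_eq <;> decide) (by apply mk_eq <;> decide)
  have e31 : f (mkState true true true true true true 1 2) = 0 := hf.1 _ (by decide)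
  have e32 : f (mkState true false true true true true 1 2) = 1 + (f (mkState true false true true true true 0 1) + f (mkState true false true true true true 0 2)) / 2 :=
    step f hf _ _ _ 1 2 0 (by decide) (by decide) (by decide) rfl (by decide) (by apply mk_eq <;> decide) (by apply mk_eq <;> decide)
  linarith
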